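/- With A = -∂_r + (k/r)cos(I) and A* = ∂_r + 1/r + (k/r)cos(I), where I(r)=2 arctan(r^k), one has for every twice differentiable ψ : (0,∞) → ℝ: (A*(Aψ))(r) = -ψ''(r) - ψ'(r)/r + (k²/r²)·cos(2I(r))·ψ(r). -/

import Mathlib

open Real

/-!
For any superpotential `W`, the operators `Aψ = -ψ' + Wψ` and `A*ψ = ψ' + ψ/r + Wψ` compose to
`A*Aψ = -ψ'' - ψ'/r + (W' + W/r + W²)ψ`. For `W = (k/r) cos I` the identity `r I' = k sin I`,
which comes from `sin (2 arctan x) = 2x/(1 + x²)`, turns the Riccati expression `W' + W/r + W²`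
into `(k²/r²)(cos² I - sin² I) = (k²/r²) cos 2I`.
-/

theorem sin_two_mul_arctan (x : ℝ) : sin (2 * arctan x) = 2 * x / (1 + x ^ 2) := by
  have hpos : 0 < 1 + x ^ 2 := by positivity
  rw [sin_two_mul, sin_arctan, cos_arctan]
  field_simp
  rw [sq_sqrt hpos.le]

theorem natCast_mul_pow_sub_one_mul {R : Type*} [Semiring R] (k : ℕ) (r : R) :
    k * r ^ (k - 1) * r = k * r ^ k := by
  rcases Nat.eq_zero_or_pos k with rfl | hk
  · simp
  · rw [mul_assoc, pow_sub_one_mul hk.ne']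

theorem hasDerivAt_two_mul_arctan_pow (k : ℕ) {r : ℝ} (hr : r ≠ 0) :
    HasDerivAt (fun x => 2 * arctan (x ^ k)) (k * sin (2 * arctan (r ^ k)) / r) r := by
  have h : HasDerivAt (fun x => 2 * arctan (x ^ k))
      (2 * (1 / (1 + (r ^ k) ^ 2) * (k * r ^ (k - 1)))) r :=
    ((hasDerivAt_arctan (r ^ k)).comp r (hasDerivAt_pow k r)).const_mul 2
  refine h.congr_deriv ?_
  rw [sin_two_mul_arctan, eq_div_iff hr]
  field_simp
  linear_combination natCast_mul_pow_sub_one_mul k r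

theorem riccati_factorization {W ψ : ℝ → ℝ} {r : ℝ} (hW : DifferentiableAt ℝ W r)
    (hψ : DifferentiableAt ℝ ψ r) (hψ' : DifferentiableAt ℝ (deriv ψ) r) :
    deriv (fun x => -deriv ψ x + W x * ψ x) r + (-deriv ψ r + W r * ψ r) / r
        + W r * (-deriv ψ r + W r * ψ r)
      = -deriv (deriv ψ) r - deriv ψ r / r + (deriv W r + W r / r + W r ^ 2) * ψ r := by
  rw [(hψ'.hasDerivAt.fun_neg.fun_add (hW.hasDerivAt.fun_mul hψ.hasDerivAt)).deriv]
  ring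

theorem deriv_add_div_add_sq_eq_cos_two_mul {k r : ℝ} {I : ℝ → ℝ} (hr : r ≠ 0)
    (hI : HasDerivAt I (k * sin (I r) / r) r) :
    deriv (fun x => k / x * cos (I x)) r + k / r * cos (I r) / r + (k / r * cos (I r)) ^ 2
      = k ^ 2 / r ^ 2 * cos (2 * I r) := by
  have hW : HasDerivAt (fun x => k / x * cos (I x))
      (k * -(r ^ 2)⁻¹ * cos (I r) + k * r⁻¹ * (-sin (I r) * (k * sin (I r) / r))) r := by
    simpa only [div_eq_mul_inv] using ((hasDerivAt_inv hr).const_mul k).fun_mul hI.cos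
  rw [hW.deriv, cos_two_mul, ← sin_sq_add_cos_sq (I r)]
  field_simp
  ring

theorem hamiltonian_factorization_general (k : ℕ)
    (I : ℝ → ℝ) (hI : ∀ r : ℝ, I r = 2 * Real.arctan (r ^ k))
    (A Astar : (ℝ → ℝ) → (ℝ → ℝ))
    (hA : ∀ ψ : ℝ → ℝ, ∀ r : ℝ,
      A ψ r = -deriv ψ r + ((k : ℝ) / r) * Real.cos (I r) * ψ r)
    (hAstar : ∀ ψ : ℝ → ℝ, ∀ r : ℝ,
      Astar ψ r = deriv ψ r + ψ r / r + ((k : ℝ) / r) * Real.cos (I r) * ψ r)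
    (ψ : ℝ → ℝ) (hψ : Differentiable ℝ ψ) (hψ' : Differentiable ℝ (deriv ψ)) :
    ∀ r : ℝ, 0 < r →
      Astar (A ψ) r
        = -deriv (deriv ψ) r - deriv ψ r / r
          + ((k : ℝ) ^ 2 / r ^ 2) * Real.cos (2 * I r) * ψ r := by
  intro r hr
  have hIr : HasDerivAt I (k * sin (I r) / r) r := by
    simpa only [← hI] using hasDerivAt_two_mul_arctan_pow k hr.ne'
  have hW : DifferentiableAt ℝ (fun x => (k : ℝ) / x * cos (I x)) r := by
    have := hIr.differentiableAt
    fun_prop (disch := exact hr.ne')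
  rw [hAstar, funext (hA ψ), riccati_factorization hW (hψ r) (hψ' r),
    deriv_add_div_add_sq_eq_cos_two_mul hr.ne' hIr]

/-- Factorization `H = A* A` of the linearized Hamiltonian: for twice differentiable `ψ`,
`A*(Aψ) = -ψ'' - ψ'/r + (k²/r²) cos(2I) ψ` on `(0,∞)`. -/
theorem hamiltonian_factorization (k : ℕ) (hk : 1 ≤ k)
    (I : ℝ → ℝ) (hI : ∀ r : ℝ, I r = 2 * Real.arctan (r ^ k))
    (A Astar : (ℝ → ℝ) → (ℝ → ℝ))
    (hA : ∀ ψ : ℝ → ℝ, ∀ r : ℝ,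
      A ψ r = -deriv ψ r + ((k : ℝ) / r) * Real.cos (I r) * ψ r)
    (hAstar : ∀ ψ : ℝ → ℝ, ∀ r : ℝ,
      Astar ψ r = deriv ψ r + ψ r / r + ((k : ℝ) / r) * Real.cos (I r) * ψ r)
    (ψ : ℝ → ℝ) (hψ : Differentiable ℝ ψ) (hψ' : Differentiable ℝ (deriv ψ)) :
    ∀ r : ℝ, 0 < r →
      Astar (A ψ) r
        = -deriv (deriv ψ) r - deriv ψ r / r
          + ((k : ℝ) ^ 2 / r ^ 2) * Real.cos (2 * I r) * ψ r :=
  hamiltonian_factorization_general k I hI A Astar hA hAstar ψ hψ hψ'
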